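/- arXiv:2109.04042 — 2 statements merged into one kernel-verified Lean document; each statement's English description precedes it below -/
import Mathlib

section
/- Let X ~ Hypergeometric(N, K, n) and let 0 < t < K/N. Then Pr[X ≤ (K/N − t)·n] ≤ exp(−2t²n). -/
/-! Chernoff's method with `λ = 4t` reduces the bound to `E[x ^ X] ≤ (1 - p + p x) ^ n` for
`x = exp (-λ)` and `p = K / N`, followed by Hoeffding's lemma for a Bernoulli(p) variable,
`1 - p + p e^s ≤ exp (p s + s² / 8)`. The probability generating function of `X` is dominated by
the binomial one (Hoeffding's comparison of sampling without and with replacement): writing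
`y = 1 + u`, the coefficient of `u ^ j` in `E[y ^ X]` is the factorial moment
`E[C(X, j)] = C(K, j) C(N - j, n - j) / C(N, n)`, which is at most `C(n, j) p ^ j`. This gives the
comparison for `y ≥ 1`; the case `x ≤ 1` follows by exchanging marked and unmarked items, which
replaces `X` by `n - X`. -/

open Finset Real

/-- Probability mass function of the hypergeometric distribution with
population size `N`, `K` marked items, and `n` draws without replacement. -/
noncomputable def hypergeomPMF (N K n k : ℕ) : ℝ :=
  ((Nat.choose K k : ℝ) * (Nat.choose (N - K) (n - k) : ℝ)) / (Nat.choose N n : ℝ)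

open MeasureTheory ProbabilityTheory unitInterval in
theorem one_sub_add_mul_exp_le_exp {p : ℝ} (hp₀ : 0 ≤ p) (hp₁ : p ≤ 1) (s : ℝ) :
    1 - p + p * exp s ≤ exp (p * s + s ^ 2 / 8) := by
  set μ : Measure ℝ := Ber(1, 0, ⟨p, hp₀, hp₁⟩)
  have hmean : μ[id] = p := by simp [μ, integral_bernoulliMeasure]
  have hbdd : ∀ᵐ ω ∂μ, id ω ∈ Set.Icc (0 : ℝ) 1 := by
    simp only [μ, bernoulliMeasure_def, ae_add_measure_iff]
    exact ⟨Measure.ae_smul_measure (by simp [ae_dirac_eq]) _,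
      Measure.ae_smul_measure (by simp [ae_dirac_eq]) _⟩
  have hoeffding := (hasSubgaussianMGF_of_mem_Icc aemeasurable_id hbdd).mgf_le s
  have hmgf : mgf (fun ω ↦ id ω - μ[id]) μ s = exp (-(p * s)) * (1 - p + p * exp s) := by
    rw [mgf, integral_bernoulliMeasure, hmean]
    simp only [id, smul_eq_mul]
    rw [show s * (1 - p) = -(p * s) + s by ring, show s * (0 - p) = -(p * s) by ring, exp_add]
    ring
  rw [hmgf] at hoeffding
  have hc : (((‖(1 : ℝ) - 0‖₊ / 2) ^ 2 : NNReal) : ℝ) = 1 / 4 := by norm_num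
  rw [hc, ← le_div_iff₀' (exp_pos _), ← exp_sub] at hoeffding
  calc 1 - p + p * exp s ≤ exp (1 / 4 * s ^ 2 / 2 - -(p * s)) := hoeffding
    _ = exp (p * s + s ^ 2 / 8) := by ring_nf

theorem Nat.choose_mul_pow_le_choose_mul_pow {K N : ℕ} (hK : K ≤ N) (j : ℕ) :
    K.choose j * N ^ j ≤ N.choose j * K ^ j := by
  have hdesc : K.descFactorial j * N ^ j ≤ N.descFactorial j * K ^ j := by
    have hprod (a b : ℕ) : a.descFactorial j * b ^ j = ∏ i ∈ range j, (a - i) * b := by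
      rw [Nat.descFactorial_eq_prod_range, prod_mul_distrib, prod_const, card_range]
    rw [hprod, hprod]
    refine prod_le_prod' fun i _ ↦ ?_
    rw [Nat.sub_mul, Nat.sub_mul, mul_comm K N]
    exact Nat.sub_le_sub_left (Nat.mul_le_mul_left i hK) _
  rw [Nat.descFactorial_eq_factorial_mul_choose, Nat.descFactorial_eq_factorial_mul_choose,
    mul_assoc, mul_assoc] at hdesc
  exact Nat.le_of_mul_le_mul_left hdesc j.factorial_pos

theorem Nat.sum_range_choose_mul_choose_mul_choose (K M : ℕ) {n j : ℕ} (hj : j ≤ n) :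
    ∑ k ∈ range (n + 1), K.choose k * k.choose j * M.choose (n - k)
      = K.choose j * (K - j + M).choose (n - j) := by
  rw [← sum_range_add_sum_Ico _ (by omega : j ≤ n + 1),
    sum_eq_zero fun k hk ↦ by rw [Nat.choose_eq_zero_of_lt (mem_range.1 hk), mul_zero, zero_mul],
    zero_add, sum_Ico_eq_sum_range, Nat.add_choose_eq, Nat.sum_antidiagonal_eq_sum_range_succ
      (fun a b ↦ (K - j).choose a * M.choose b), mul_sum, show n + 1 - j = (n - j).succ by omega]
  refine sum_congr rfl fun i _ ↦ ?_
  rw [Nat.choose_mul (Nat.le_add_right j i), Nat.add_sub_cancel_left, Nat.sub_add_eq, mul_assoc]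

theorem Nat.choose_mul_choose_mul_pow_le (K M : ℕ) {n j : ℕ} (hj : j ≤ n) :
    K.choose j * (K - j + M).choose (n - j) * (K + M) ^ j
      ≤ (K + M).choose n * n.choose j * K ^ j := by
  rcases lt_or_ge K j with hKj | hjK
  · simp [Nat.choose_eq_zero_of_lt hKj]
  rw [Nat.choose_mul hj, show K - j + M = K + M - j by omega, mul_right_comm,
    mul_right_comm _ _ (K ^ j)]
  exact Nat.mul_le_mul_right _ (Nat.choose_mul_pow_le_choose_mul_pow (Nat.le_add_right K M) j)

theorem sum_range_choose_mul_choose_mul_one_add_pow {R : Type*} [CommSemiring R]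
    (K M n : ℕ) (u : R) :
    ∑ k ∈ range (n + 1), (K.choose k * M.choose (n - k) : R) * (1 + u) ^ k
      = ∑ j ∈ range (n + 1), (K.choose j * (K - j + M).choose (n - j) : R) * u ^ j := by
  have hexpand : ∀ k ∈ range (n + 1),
      (1 + u) ^ k = ∑ j ∈ range (n + 1), (k.choose j : R) * u ^ j := by
    intro k hk
    rw [add_comm, add_pow]
    refine sum_subset (range_subset_range.2 (mem_range.1 hk)) (fun j _ hj ↦ ?_) |>.trans ?_
    · rw [Nat.choose_eq_zero_of_lt (by simpa using hj)]; simp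
    · exact sum_congr rfl fun j _ ↦ by ring
  calc _ = ∑ j ∈ range (n + 1),
        ((∑ k ∈ range (n + 1), K.choose k * k.choose j * M.choose (n - k) : ℕ) : R) * u ^ j := by
        rw [sum_congr rfl fun k hk ↦ by rw [hexpand k hk]]
        simp only [mul_sum, Nat.cast_sum, sum_mul, Nat.cast_mul]
        rw [sum_comm]
        exact sum_congr rfl fun j _ ↦ sum_congr rfl fun k _ ↦ by ring
    _ = _ := sum_congr rfl fun j hj ↦ by
        rw [Nat.sum_range_choose_mul_choose_mul_choose K M (by simpa [Nat.lt_succ_iff] using hj)]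
        push_cast; rfl

theorem sum_range_choose_mul_choose_mul_one_add_pow_le {K M : ℕ} (hKM : 0 < K + M) (n : ℕ)
    {u : ℝ} (hu : 0 ≤ u) :
    ∑ k ∈ range (n + 1), (K.choose k * M.choose (n - k) : ℝ) * (1 + u) ^ k
      ≤ (K + M).choose n * (1 + K / (K + M) * u) ^ n := by
  have hN : (0 : ℝ) < K + M := by exact_mod_cast hKM
  rw [sum_range_choose_mul_choose_mul_one_add_pow, add_comm 1, add_pow, mul_sum]
  refine sum_le_sum fun j hj ↦ ?_
  have hterm : (K.choose j * (K - j + M).choose (n - j) : ℝ)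
      ≤ (K + M).choose n * n.choose j * K ^ j / (K + M) ^ j := by
    rw [le_div_iff₀ (by positivity)]
    exact_mod_cast Nat.choose_mul_choose_mul_pow_le K M (Nat.lt_succ_iff.1 (mem_range.1 hj))
  calc (K.choose j * (K - j + M).choose (n - j) : ℝ) * u ^ j
      ≤ (K + M).choose n * n.choose j * K ^ j / (K + M) ^ j * u ^ j := by gcongr
    _ = _ := by ring

theorem sum_range_choose_mul_choose_mul_pow_le {K M : ℕ} (hKM : 0 < K + M) (n : ℕ)
    {x : ℝ} (hx₀ : 0 < x) (hx₁ : x ≤ 1) :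
    ∑ k ∈ range (n + 1), (K.choose k * M.choose (n - k) : ℝ) * x ^ k
      ≤ (K + M).choose n * (1 - K / (K + M) + K / (K + M) * x) ^ n := by
  have hreflect : ∑ k ∈ range (n + 1), (K.choose k * M.choose (n - k) : ℝ) * x ^ k
      = x ^ n *
          ∑ k ∈ range (n + 1), (M.choose k * K.choose (n - k) : ℝ) * (1 + (x⁻¹ - 1)) ^ k := by
    rw [← sum_range_reflect, mul_sum]
    refine sum_congr rfl fun k hk ↦ ?_
    have hkn : k ≤ n := Nat.lt_succ_iff.1 (mem_range.1 hk)
    rw [Nat.add_sub_cancel, Nat.sub_sub_self hkn, add_sub_cancel, pow_sub₀ x hx₀.ne' hkn,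
      inv_pow]
    ring
  have hupper := sum_range_choose_mul_choose_mul_one_add_pow_le (add_comm K M ▸ hKM) n
    (sub_nonneg.2 ((one_le_inv₀ hx₀).2 hx₁))
  have hN : (0 : ℝ) < K + M := by exact_mod_cast hKM
  calc _ ≤ x ^ n * ((M + K).choose n * (1 + M / (M + K) * (x⁻¹ - 1)) ^ n) := by
        rw [hreflect]; gcongr
    _ = (K + M).choose n * (x * (1 + M / (M + K) * (x⁻¹ - 1))) ^ n := by
        rw [add_comm M K, mul_pow]; ring
    _ = _ := by
        congr 2
        rw [add_comm (M : ℝ)]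
        field_simp
        ring

theorem sum_range_hypergeomPMF_mul_pow_le {N K : ℕ} (hK : K ≤ N) (hN : 0 < N) (n : ℕ)
    {x : ℝ} (hx₀ : 0 < x) (hx₁ : x ≤ 1) :
    ∑ k ∈ range (n + 1), hypergeomPMF N K n k * x ^ k ≤ (1 - K / N + K / N * x) ^ n := by
  have hcount :=
    sum_range_choose_mul_choose_mul_pow_le (K := K) (M := N - K) (by omega) n hx₀ hx₁
  rw [Nat.add_sub_cancel' hK, Nat.cast_sub hK, add_sub_cancel] at hcount
  have hp : (K : ℝ) / N ≤ 1 := div_le_one_of_le₀ (by exact_mod_cast hK) (Nat.cast_nonneg N)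
  have hsum : ∑ k ∈ range (n + 1), hypergeomPMF N K n k * x ^ k
      = (∑ k ∈ range (n + 1), (K.choose k * (N - K).choose (n - k) : ℝ) * x ^ k) /
          N.choose n := by
    simp only [hypergeomPMF, sum_div, div_mul_eq_mul_div]
  rw [hsum]
  exact div_le_of_le_mul₀ (Nat.cast_nonneg _) (pow_nonneg (by nlinarith) n) (by rwa [mul_comm])

theorem sum_ite_le_sum_mul_exp {ι : Type*} (s : Finset ι) {w f : ι → ℝ}
    (hw : ∀ i ∈ s, 0 ≤ w i) {a l : ℝ} (hl : 0 ≤ l) :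
    ∑ i ∈ s, (if f i ≤ a then w i else 0) ≤ ∑ i ∈ s, w i * exp (l * (a - f i)) := by
  refine sum_le_sum fun i hi ↦ ?_
  split_ifs with h
  · exact le_mul_of_one_le_right (hw i hi) (one_le_exp (mul_nonneg hl (sub_nonneg.2 h)))
  · exact mul_nonneg (hw i hi) (exp_pos _).le

theorem hypergeom_lower_tail_general (N K n : ℕ) (hK : K ≤ N) (t : ℝ)
    (ht : 0 < t) (ht' : t < (K : ℝ) / (N : ℝ)) :
    ∑ k ∈ Finset.range (n + 1),
        (if (k : ℝ) ≤ ((K : ℝ) / (N : ℝ) - t) * (n : ℝ) then hypergeomPMF N K n k else 0)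
      ≤ Real.exp (-2 * t ^ 2 * (n : ℝ)) := by
  have hN : 0 < N := Nat.pos_of_ne_zero fun h ↦ by simp [h] at ht'; linarith
  set p : ℝ := K / N
  have hp₀ : 0 ≤ p := by positivity
  have hp₁ : p ≤ 1 := div_le_one_of_le₀ (by exact_mod_cast hK) (Nat.cast_nonneg N)
  have hpmf : ∀ k ∈ range (n + 1), 0 ≤ hypergeomPMF N K n k := fun k _ ↦ by
    unfold hypergeomPMF; positivity
  have hbase : 0 ≤ 1 - p + p * exp (-(4 * t)) := by nlinarith [exp_pos (-(4 * t))]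
  calc _ ≤ ∑ k ∈ range (n + 1), hypergeomPMF N K n k * exp (4 * t * ((p - t) * n - k)) :=
        sum_ite_le_sum_mul_exp _ hpmf (by positivity)
    _ = exp (4 * t * (p - t) * n) *
          ∑ k ∈ range (n + 1), hypergeomPMF N K n k * exp (-(4 * t)) ^ k := by
        rw [mul_sum]
        refine sum_congr rfl fun k _ ↦ ?_
        rw [← exp_nat_mul, mul_left_comm, ← exp_add]
        ring_nf
    _ ≤ exp (4 * t * (p - t) * n) * (1 - p + p * exp (-(4 * t))) ^ n := by
        gcongr
        exact sum_range_hypergeomPMF_mul_pow_le hK hN n (exp_pos _)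
          (exp_le_one_iff.2 (by linarith))
    _ ≤ exp (4 * t * (p - t) * n) * exp (p * -(4 * t) + (-(4 * t)) ^ 2 / 8) ^ n := by
        gcongr
        exact one_sub_add_mul_exp_le_exp hp₀ hp₁ _
    _ = exp (-2 * t ^ 2 * n) := by
        rw [← exp_nat_mul, ← exp_add]
        ring_nf

/-- Lower tail bound for the hypergeometric distribution:
if `X ~ Hypergeometric(N, K, n)` and `0 < t < K/N`, then
`Pr[X ≤ (K/N − t)·n] ≤ exp(−2 t² n)`. -/
theorem hypergeom_lower_tail (N K n : ℕ) (hK : K ≤ N) (hn : n ≤ N) (t : ℝ)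
    (ht : 0 < t) (ht' : t < (K : ℝ) / (N : ℝ)) :
    ∑ k ∈ Finset.range (n + 1),
        (if (k : ℝ) ≤ ((K : ℝ) / (N : ℝ) - t) * (n : ℝ) then hypergeomPMF N K n k else 0)
      ≤ Real.exp (-2 * t ^ 2 * (n : ℝ)) :=
  hypergeom_lower_tail_general N K n hK t ht ht'
end

section
/- Let X ~ Hypergeometric(N, K, n) and let λ > nK/N. Then Pr[X ≥ λ] ≤ exp(−2n·(λ/n − K/N)²). -/
open Finset Real

/-!
Hoeffding's comparison with sampling with replacement. With `p = K / N`, the factorial moments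
`E[C(X, j)] = C(K, j) C(N - j, n - j) / C(N, n)` of the hypergeometric distribution are at most
the binomial ones `C(n, j) p ^ j`. Expanding `x ^ X = ∑ C(X, j) (x - 1) ^ j` with `x - 1 ≥ 0`
transfers this to the generating function: `E[x ^ X] ≤ (1 + p (x - 1)) ^ n`. Hoeffding's lemma
for a Bernoulli variable gives `1 + p (e ^ t - 1) ≤ exp (p t + t ^ 2 / 8)`, and the Chernoff
bound at `t = 4 (λ / n - p)` yields `exp (-2 n (λ / n - p) ^ 2)`.
-/

open MeasureTheory ProbabilityTheory in
theorem one_add_mul_exp_sub_one_le_exp {p : ℝ} (hp₀ : 0 ≤ p) (hp₁ : p ≤ 1) (t : ℝ) :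
    1 + p * (exp t - 1) ≤ exp (p * t + t ^ 2 / 8) := by
  set X : Bool → ℝ := fun b => if b then 1 else 0
  have hX : ∀ b, X b ∈ Set.Icc (0 : ℝ) 1 := by simp [X]
  have hoeffding : p * exp (t * (1 - p)) + (1 - p) * exp (-(t * p)) ≤ exp (t ^ 2 / 8) := by
    convert (hasSubgaussianMGF_of_mem_Icc (μ := Ber(true, false, ⟨p, hp₀, hp₁⟩))
      Measurable.of_discrete.aemeasurable (ae_of_all _ hX)).mgf_le t using 1
    · simp [mgf, integral_bernoulliMeasure, X]
    · norm_num; ring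
  have h₁ : exp (p * t) * exp (t * (1 - p)) = exp t := by rw [← exp_add]; ring_nf
  have h₀ : exp (p * t) * exp (-(t * p)) = 1 := by rw [← exp_add]; ring_nf; exact exp_zero
  calc 1 + p * (exp t - 1)
      = exp (p * t) * (p * exp (t * (1 - p)) + (1 - p) * exp (-(t * p))) := by
        linear_combination -p * h₁ - (1 - p) * h₀
    _ ≤ exp (p * t) * exp (t ^ 2 / 8) := by gcongr
    _ = exp (p * t + t ^ 2 / 8) := (exp_add _ _).symm

theorem sum_ite_le_exp_mul_sum_mul_exp_pow (s : Finset ℕ) {w : ℕ → ℝ}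
    (hw : ∀ k ∈ s, 0 ≤ w k) {t : ℝ} (ht : 0 ≤ t) (lam : ℝ) :
    ∑ k ∈ s, (if lam ≤ k then w k else 0) ≤ exp (-(t * lam)) * ∑ k ∈ s, w k * exp t ^ k := by
  rw [mul_sum]
  refine sum_le_sum fun k hk => ?_
  have hexp : exp (-(t * lam)) * (w k * exp t ^ k) = exp (t * (k - lam)) * w k := by
    rw [← exp_nat_mul, mul_comm (w k), ← mul_assoc, ← exp_add]; ring_nf
  rw [hexp]
  split_ifs with hlam
  · exact le_mul_of_one_le_left (hw k hk) (one_le_exp (mul_nonneg ht (by linarith)))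
  · exact mul_nonneg (exp_nonneg _) (hw k hk)

theorem sum_choose_mul_choose_mul_choose (K M : ℕ) {n j : ℕ} (hj : j ≤ n) :
    ∑ k ∈ range (n + 1), K.choose k * k.choose j * M.choose (n - k)
      = K.choose j * (K + M - j).choose (n - j) := by
  obtain ⟨m, rfl⟩ := Nat.exists_eq_add_of_le hj
  by_cases hjK : j ≤ K
  · rw [show j + m + 1 = j + (m + 1) by ring, sum_range_add, sum_eq_zero fun k hk => by
      rw [Nat.choose_eq_zero_of_lt (mem_range.1 hk), mul_zero, zero_mul], zero_add]
    simp only [Nat.choose_mul (Nat.le_add_right j _), Nat.add_sub_cancel_left,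
      Nat.add_sub_add_left, mul_assoc, ← mul_sum]
    rw [show K + M - j = K - j + M by omega, Nat.add_choose_eq,
      Nat.sum_antidiagonal_eq_sum_range_succ_mk]
  · rw [Nat.choose_eq_zero_of_lt (by omega), zero_mul]
    refine sum_eq_zero fun k _ => ?_
    rcases lt_or_ge k j with hkj | hjk
    · rw [Nat.choose_eq_zero_of_lt hkj, mul_zero, zero_mul]
    · rw [Nat.choose_eq_zero_of_lt (by omega : K < k), zero_mul, zero_mul]

theorem pow_mul_descFactorial_le {K N : ℕ} (hK : K ≤ N) (j : ℕ) :
    N ^ j * K.descFactorial j ≤ K ^ j * N.descFactorial j := by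
  rw [Nat.descFactorial_eq_prod_range, Nat.descFactorial_eq_prod_range, pow_eq_prod_const,
    pow_eq_prod_const, ← prod_mul_distrib, ← prod_mul_distrib]
  refine prod_le_prod' fun i _ => ?_
  rw [Nat.mul_sub, Nat.mul_sub, mul_comm N K]
  exact Nat.sub_le_sub_left (Nat.mul_le_mul_right i hK) _

theorem pow_mul_choose_le {K N : ℕ} (hK : K ≤ N) (j : ℕ) :
    N ^ j * K.choose j ≤ K ^ j * N.choose j := by
  refine Nat.le_of_mul_le_mul_left ?_ j.factorial_pos
  simpa only [Nat.descFactorial_eq_factorial_mul_choose, mul_left_comm]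
    using pow_mul_descFactorial_le hK j

theorem pow_eq_sum_range_choose_mul_sub_one_pow {R : Type*} [CommRing R] (x : R) {k n : ℕ}
    (hk : k ≤ n) : x ^ k = ∑ j ∈ range (n + 1), k.choose j * (x - 1) ^ j := by
  conv_lhs => rw [← sub_add_cancel x 1, add_pow]
  refine (sum_subset (range_subset_range.2 (Nat.succ_le_succ hk)) fun j _ hj => ?_).trans ?_
  · rw [Nat.choose_eq_zero_of_lt (by simpa using hj), Nat.cast_zero, mul_zero]
  · exact sum_congr rfl fun j _ => by rw [one_pow, mul_one, mul_comm]

section Hypergeometric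

variable {N K n : ℕ}

theorem sum_hypergeomPMF_mul_choose (hK : K ≤ N) {j : ℕ} (hj : j ≤ n) :
    ∑ k ∈ range (n + 1), hypergeomPMF N K n k * k.choose j
      = K.choose j * (N - j).choose (n - j) / N.choose n := by
  have h := sum_choose_mul_choose_mul_choose K (N - K) hj
  rw [Nat.add_sub_cancel' hK] at h
  simp only [hypergeomPMF, div_mul_eq_mul_div, ← sum_div]
  congr 1
  exact_mod_cast (sum_congr rfl fun k _ => by ring).trans h

theorem sum_hypergeomPMF_mul_choose_le (hK : K ≤ N) (hn : n ≤ N) {j : ℕ} (hj : j ≤ n) :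
    ∑ k ∈ range (n + 1), hypergeomPMF N K n k * k.choose j
      ≤ n.choose j * ((K : ℝ) / N) ^ j := by
  have hNj : (0 : ℝ) < (N : ℝ) ^ j := by
    rcases Nat.eq_zero_or_pos N with rfl | hN
    · simp [show j = 0 by omega]
    · positivity
  have hnat : N ^ j * (K.choose j * (N - j).choose (n - j))
      ≤ K ^ j * (N.choose n * n.choose j) := by
    rw [Nat.choose_mul hj, ← mul_assoc, ← mul_assoc]
    exact Nat.mul_le_mul_right _ (pow_mul_choose_le hK j)
  rw [sum_hypergeomPMF_mul_choose hK hj, div_le_iff₀ (by exact_mod_cast Nat.choose_pos hn),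
    div_pow, mul_div_assoc', div_mul_eq_mul_div, le_div_iff₀ hNj]
  exact_mod_cast (by linarith :
    K.choose j * (N - j).choose (n - j) * N ^ j ≤ n.choose j * K ^ j * N.choose n)

theorem sum_hypergeomPMF_mul_pow_le (hK : K ≤ N) (hn : n ≤ N) {x : ℝ} (hx : 1 ≤ x) :
    ∑ k ∈ range (n + 1), hypergeomPMF N K n k * x ^ k ≤ (1 + K / N * (x - 1)) ^ n :=
  calc ∑ k ∈ range (n + 1), hypergeomPMF N K n k * x ^ k
      = ∑ j ∈ range (n + 1), (∑ k ∈ range (n + 1), hypergeomPMF N K n k * k.choose j)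
          * (x - 1) ^ j := by
        simp only [sum_mul, mul_assoc]
        rw [sum_comm]
        refine sum_congr rfl fun k hk => ?_
        rw [← mul_sum, ← pow_eq_sum_range_choose_mul_sub_one_pow x (mem_range_succ_iff.1 hk)]
    _ ≤ ∑ j ∈ range (n + 1), n.choose j * ((K : ℝ) / N) ^ j * (x - 1) ^ j := by
        refine sum_le_sum fun j hj => mul_le_mul_of_nonneg_right ?_ (by bound)
        exact sum_hypergeomPMF_mul_choose_le hK hn (mem_range_succ_iff.1 hj)
    _ = (1 + K / N * (x - 1)) ^ n := by
        rw [add_comm (1 : ℝ), add_pow]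
        exact sum_congr rfl fun j _ => by rw [one_pow, mul_one, mul_pow]; ring

theorem sum_ite_hypergeomPMF_le_exp (hK : K ≤ N) (hn : n ≤ N) {t : ℝ} (ht : 0 ≤ t) (lam : ℝ) :
    ∑ k ∈ range (n + 1), (if lam ≤ (k : ℝ) then hypergeomPMF N K n k else 0)
      ≤ exp (n * (K / N * t + t ^ 2 / 8) - t * lam) := by
  have hp₀ : (0 : ℝ) ≤ K / N := by positivity
  have hp₁ : (K : ℝ) / N ≤ 1 := div_le_one_of_le₀ (by exact_mod_cast hK) (Nat.cast_nonneg N)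
  calc ∑ k ∈ range (n + 1), (if lam ≤ (k : ℝ) then hypergeomPMF N K n k else 0)
      ≤ exp (-(t * lam)) * ∑ k ∈ range (n + 1), hypergeomPMF N K n k * exp t ^ k :=
        sum_ite_le_exp_mul_sum_mul_exp_pow _
          (fun k _ => by unfold hypergeomPMF; positivity) ht lam
    _ ≤ exp (-(t * lam)) * (1 + K / N * (exp t - 1)) ^ n := by
        gcongr
        exact sum_hypergeomPMF_mul_pow_le hK hn (one_le_exp ht)
    _ ≤ exp (-(t * lam)) * exp (K / N * t + t ^ 2 / 8) ^ n := by
        gcongr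
        · nlinarith [one_le_exp ht]
        · exact one_add_mul_exp_sub_one_le_exp hp₀ hp₁ t
    _ = exp (n * (K / N * t + t ^ 2 / 8) - t * lam) := by
        rw [← exp_nat_mul, ← exp_add]; ring_nf

end Hypergeometric

/-- Upper tail (Serfling-type) bound for the hypergeometric distribution:
if `X ~ Hypergeometric(N, K, n)` and `λ > nK/N`, then
`Pr[X ≥ λ] ≤ exp(−2n (λ/n − K/N)²)`. -/
theorem hypergeom_upper_tail (N K n : ℕ) (hK : K ≤ N) (hn : n ≤ N) (lam : ℝ)
    (hlam : (n : ℝ) * (K : ℝ) / (N : ℝ) < lam) :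
    ∑ k ∈ Finset.range (n + 1),
        (if lam ≤ (k : ℝ) then hypergeomPMF N K n k else 0)
      ≤ Real.exp (-2 * (n : ℝ) * (lam / (n : ℝ) - (K : ℝ) / (N : ℝ)) ^ 2) := by
  rcases Nat.eq_zero_or_pos n with rfl | hn₀
  · rw [Nat.cast_zero, zero_mul, zero_div] at hlam
    simp [hlam.not_ge]
  have hgap : 0 ≤ lam / n - K / N := by
    rw [sub_nonneg, le_div_iff₀ (by exact_mod_cast hn₀)]
    linarith [show (n : ℝ) * K / N = K / N * n by ring]
  refine (sum_ite_hypergeomPMF_le_exp hK hn (t := 4 * (lam / n - K / N)) (by positivity)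
    lam).trans_eq ?_
  congr 1
  field_simp
  ring
end
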